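/- arXiv:2411.08428 — 3 statements merged into one kernel-verified Lean document; each statement's English description precedes it below -/
import Mathlib

section
/- Let λ, ν > 0 and let U : ℝ³ → ℝ be the positive radial solution of −ΔU + λU = νU³ on ℝ³ (so that U(x)e^{√λ|x|}|x| → C₀ > 0 as |x| → ∞). Suppose ψ : ℝ³ → ℝ is a radial solution of −Δψ + (λ − 3νU²)ψ = U such that for some γ ∈ (0,λ) and some R₀ > 0 one has 0 < ψ(x) < e^{−√γ|x|} for |x| ≥ R₀. Then there exists a constant C > 0 such that ψ(x) ≤ C(1 + |x|)e^{−√λ|x|} for all x ∈ ℝ³. -/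
noncomputable section
open MeasureTheory Filter Topology

abbrev En (N : ℕ) := EuclideanSpace ℝ (Fin N)

/-- Second derivative of `f` at `x` in directions `v`, `w`. -/
def d2 {N : ℕ} (f : En N → ℝ) (x v w : En N) : ℝ :=
  iteratedFDeriv ℝ 2 f x ![v, w]

/-- The Laplacian, as the sum of pure second partial derivatives. -/
def lap {N : ℕ} (f : En N → ℝ) (x : En N) : ℝ :=
  ∑ i : Fin N, d2 f x (EuclideanSpace.single i 1) (EuclideanSpace.single i 1)

/-- A function is even with respect to each coordinate. -/
def evenCoord {N : ℕ} (u : En N → ℝ) : Prop :=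
  ∀ (x : En N) (i : Fin N), u (x - (2 * x i) • EuclideanSpace.single i 1) = u x

/-- A radially symmetric function. -/
def radialFn {N : ℕ} (u : En N → ℝ) : Prop :=
  ∀ x y : En N, ‖x‖ = ‖y‖ → u x = u y

/-- Membership in `H¹(ℝ^N)` (function and gradient square integrable). -/
def memH1 {N : ℕ} (u : En N → ℝ) : Prop :=
  MemLp u 2 volume ∧ MemLp (fun x => ‖fderiv ℝ u x‖) 2 volume

/-- Membership in `H²(ℝ^N)`. -/
def memH2 {N : ℕ} (u : En N → ℝ) : Prop :=
  memH1 u ∧ MemLp (fun x => ‖iteratedFDeriv ℝ 2 u x‖) 2 volume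

/-- Membership in the Sobolev space `W^{2,m}(ℝ^N)`. -/
def memW2m {N : ℕ} (m : ℝ) (u : En N → ℝ) : Prop :=
  MemLp u (ENNReal.ofReal m) volume ∧
  MemLp (fun x => ‖fderiv ℝ u x‖) (ENNReal.ofReal m) volume ∧
  MemLp (fun x => ‖iteratedFDeriv ℝ 2 u x‖) (ENNReal.ofReal m) volume

/-- The `W^{2,m}` norm. -/
def W2mNorm {N : ℕ} (m : ℝ) (u : En N → ℝ) : ℝ :=
  (eLpNorm u (ENNReal.ofReal m) volume).toReal +
  (eLpNorm (fun x => ‖fderiv ℝ u x‖) (ENNReal.ofReal m) volume).toReal +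
  (eLpNorm (fun x => ‖iteratedFDeriv ℝ 2 u x‖) (ENNReal.ofReal m) volume).toReal

/-- Assumption (V₁): `V` is radial, continuous, with positive infimum, and `Υ`
is the unique positive radial solution of `-ΔΥ + VΥ = μ₁Υ³` vanishing at infinity,
nondegenerate in the space of functions even in each coordinate. -/
def V1hyp {N : ℕ} (V Υ : En N → ℝ) (μ1 : ℝ) : Prop :=
  radialFn V ∧ Continuous V ∧ (∃ c > 0, ∀ x, c ≤ V x) ∧
  ContDiff ℝ 3 Υ ∧ memH2 Υ ∧ (∀ x, 0 < Υ x) ∧ radialFn Υ ∧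
  (∀ x, -lap Υ x + V x * Υ x = μ1 * Υ x ^ 3) ∧
  Tendsto Υ (cocompact (En N)) (𝓝 0) ∧
  (∀ Υ' : En N → ℝ, ContDiff ℝ 3 Υ' → memH2 Υ' → (∀ x, 0 < Υ' x) → radialFn Υ' →
    (∀ x, -lap Υ' x + V x * Υ' x = μ1 * Υ' x ^ 3) →
    Tendsto Υ' (cocompact (En N)) (𝓝 0) → Υ' = Υ) ∧
  (∀ z : En N → ℝ, ContDiff ℝ 2 z → memH1 z → evenCoord z →
    (∀ x, -lap z x + V x * z x = 3 * μ1 * Υ x ^ 2 * z x) → z = 0)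

/-- Assumption (V₂): for every `f ∈ L^m`, `2 ≤ m < ∞`, `-Δu + Vu = f` has a unique
solution `u ∈ W^{2,m}`, with `‖u‖_{W^{2,m}} ≤ C‖f‖_{L^m}`. -/
def V2hyp {N : ℕ} (V : En N → ℝ) : Prop :=
  ∀ m : ℝ, 2 ≤ m → ∃ C > 0, ∀ f : En N → ℝ, MemLp f (ENNReal.ofReal m) volume →
    (∃! u : En N → ℝ, memW2m m u ∧ ∀ x, -lap u x + V x * u x = f x) ∧
    ∀ u : En N → ℝ, memW2m m u → (∀ x, -lap u x + V x * u x = f x) →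
      W2mNorm m u ≤ C * (eLpNorm f (ENNReal.ofReal m) volume).toReal

/-- Assumption (W): `W ∈ C³`, even in each coordinate, with positive infimum. -/
def Whyp {N : ℕ} (W : En N → ℝ) : Prop :=
  ContDiff ℝ 3 W ∧ evenCoord W ∧ ∃ c > 0, ∀ x, c ≤ W x

/-- The positive radial solution of `-ΔU + ωU = μU³` in `H¹`. -/
def groundState {N : ℕ} (U : En N → ℝ) (ω μ : ℝ) : Prop :=
  ContDiff ℝ 2 U ∧ (∀ x, 0 < U x) ∧ radialFn U ∧ memH1 U ∧
  (∀ x, -lap U x + ω * U x = μ * U x ^ 3)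

/-- Exponential decay `U(x) e^{√ω |x|} |x|^{(N-1)/2} → C₀ > 0` at infinity. -/
def solDecay {N : ℕ} (U : En N → ℝ) (ω : ℝ) : Prop :=
  ∃ C₀ > (0:ℝ), Tendsto
    (fun x : En N => U x * Real.exp (Real.sqrt ω * ‖x‖) * ‖x‖ ^ (((N:ℝ) - 1)/2))
    (cocompact (En N)) (𝓝 C₀)

section AuxLemmas
open RealInnerProductSpace

lemma d2_eq (f : En 3 → ℝ) (x v w : En 3) :
    d2 f x v w = fderiv ℝ (fderiv ℝ f) x v w := by
  show iteratedFDeriv ℝ 2 f x ![v, w] = _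
  rw [iteratedFDeriv_two_apply]
  simp

lemma hasFDerivAt_norm' (x : En 3) (hx : x ≠ 0) :
    HasFDerivAt (fun y : En 3 => ‖y‖) (‖x‖⁻¹ • innerSL ℝ x) x := by
  have hq : HasFDerivAt (fun y : En 3 => ⟪y, y⟫) ((2:ℝ) • innerSL ℝ x) x := by
    have h := (hasFDerivAt_id x).inner ℝ (hasFDerivAt_id x)
    refine h.congr_fderiv ?_
    ext v
    simp [fderivInnerCLM_apply, real_inner_comm x v]
    ring
  have hxx : ⟪x, x⟫ = ‖x‖ ^ 2 := real_inner_self_eq_norm_sq x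
  have hne : ⟪x, x⟫ ≠ 0 := by
    rw [hxx]; exact pow_ne_zero 2 (norm_ne_zero_iff.mpr hx)
  have hs := HasDerivAt.comp_hasFDerivAt (f := fun y : En 3 => ⟪y, y⟫) x (Real.hasDerivAt_sqrt hne) hq
  have hfun : (fun y : En 3 => Real.sqrt ⟪y, y⟫) = fun y : En 3 => ‖y‖ := by
    funext y
    rw [real_inner_self_eq_norm_sq, Real.sqrt_sq (norm_nonneg y)]
  simp only [Function.comp_def] at hs
  rw [hfun] at hs
  refine hs.congr_fderiv ?_
  rw [smul_smul]
  congr 1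
  rw [hxx, Real.sqrt_sq (norm_nonneg x)]
  have : ‖x‖ ≠ 0 := norm_ne_zero_iff.mpr hx
  field_simp

/-- `y ↦ ⟪y, ·⟫` as a continuous linear map. -/
def innerRight : En 3 →L[ℝ] (En 3 →L[ℝ] ℝ) :=
  LinearMap.toContinuousLinearMap
    { toFun := fun y => innerSL ℝ y
      map_add' := by intro y z; ext v; simp [inner_add_left]
      map_smul' := by intro c y; ext v; simp [real_inner_smul_left] }

@[simp] lemma innerRight_apply (y v : En 3) : innerRight y v = ⟪y, v⟫ := rfl

lemma hasFDerivAt_radial (g g' : ℝ → ℝ)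
    (hg : ∀ r : ℝ, 0 < r → HasDerivAt g (g' r) r)
    (y : En 3) (hy : y ≠ 0) :
    HasFDerivAt (fun z : En 3 => g ‖z‖) ((g' ‖y‖ * ‖y‖⁻¹) • innerRight y) y := by
  have h1 := HasDerivAt.comp_hasFDerivAt (f := fun z : En 3 => ‖z‖) y
    (hg ‖y‖ (norm_pos_iff.mpr hy)) (hasFDerivAt_norm' y hy)
  refine h1.congr_fderiv ?_
  rw [smul_smul]
  rfl

lemma hasFDerivAt_radial_deriv (g' g'' : ℝ → ℝ)
    (hg' : ∀ r : ℝ, 0 < r → HasDerivAt g' (g'' r) r)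
    (x : En 3) (hx : x ≠ 0) :
    HasFDerivAt (fun y : En 3 => (g' ‖y‖ * ‖y‖⁻¹) • innerRight y)
      ((g' ‖x‖ * ‖x‖⁻¹) • innerRight +
        (((g'' ‖x‖ * ‖x‖⁻¹ + g' ‖x‖ * -(‖x‖ ^ 2)⁻¹) * ‖x‖⁻¹) • innerRight x).smulRight
          (innerRight x)) x := by
  have hr : (0:ℝ) < ‖x‖ := norm_pos_iff.mpr hx
  have hc : HasFDerivAt (fun y : En 3 => g' ‖y‖ * ‖y‖⁻¹)
      (((g'' ‖x‖ * ‖x‖⁻¹ + g' ‖x‖ * -(‖x‖ ^ 2)⁻¹) * ‖x‖⁻¹) • innerRight x) x := by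
    have h1d : HasDerivAt (fun r : ℝ => g' r * r⁻¹)
        (g'' ‖x‖ * ‖x‖⁻¹ + g' ‖x‖ * -(‖x‖ ^ 2)⁻¹) ‖x‖ :=
      (hg' ‖x‖ hr).mul (hasDerivAt_inv hr.ne')
    have h2 := HasDerivAt.comp_hasFDerivAt (f := fun z : En 3 => ‖z‖) x h1d
      (hasFDerivAt_norm' x hx)
    refine h2.congr_fderiv ?_
    rw [smul_smul]
    rfl
  have hJ : HasFDerivAt (fun y : En 3 => innerRight y) innerRight x :=
    innerRight.hasFDerivAt
  exact hc.smul hJ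

lemma lap_radial (g g' g'' : ℝ → ℝ)
    (hg : ∀ r : ℝ, 0 < r → HasDerivAt g (g' r) r)
    (hg' : ∀ r : ℝ, 0 < r → HasDerivAt g' (g'' r) r)
    (x : En 3) (hx : x ≠ 0) :
    lap (fun y : En 3 => g ‖y‖) x = g'' ‖x‖ + 2 / ‖x‖ * g' ‖x‖ := by
  have hr : (0:ℝ) < ‖x‖ := norm_pos_iff.mpr hx
  set G : En 3 → (En 3 →L[ℝ] ℝ) := fun y => (g' ‖y‖ * ‖y‖⁻¹) • innerRight y with hGdef
  have hev : fderiv ℝ (fun y : En 3 => g ‖y‖) =ᶠ[𝓝 x] G := by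
    have hopen : {y : En 3 | y ≠ 0} ∈ 𝓝 x := isOpen_compl_singleton.mem_nhds hx
    filter_upwards [hopen] with y hy
    exact (hasFDerivAt_radial g g' hg y hy).fderiv
  have h2 := hasFDerivAt_radial_deriv g' g'' hg' x hx
  have hfd2 : fderiv ℝ (fderiv ℝ (fun y : En 3 => g ‖y‖)) x
      = ((g' ‖x‖ * ‖x‖⁻¹) • innerRight +
        (((g'' ‖x‖ * ‖x‖⁻¹ + g' ‖x‖ * -(‖x‖ ^ 2)⁻¹) * ‖x‖⁻¹) • innerRight x).smulRight
          (innerRight x)) := by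
    rw [hev.fderiv_eq]
    exact h2.fderiv
  have hd2 : ∀ v w : En 3, d2 (fun y : En 3 => g ‖y‖) x v w
      = (g' ‖x‖ * ‖x‖⁻¹) * ⟪v, w⟫
        + ((g'' ‖x‖ * ‖x‖⁻¹ + g' ‖x‖ * -(‖x‖ ^ 2)⁻¹) * ‖x‖⁻¹) * ⟪x, v⟫ * ⟪x, w⟫ := by
    intro v w
    rw [d2_eq, hfd2]
    simp [ContinuousLinearMap.smulRight_apply]
  have hsum1 : ∑ i : Fin 3, ⟪x, EuclideanSpace.single i (1:ℝ)⟫ * ⟪x, EuclideanSpace.single i (1:ℝ)⟫ = ‖x‖ ^ 2 := by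
    rw [← real_inner_self_eq_norm_sq]
    rw [PiLp.inner_apply]
    congr 1
    funext i
    rw [EuclideanSpace.inner_single_right]
    simp [RCLike.inner_apply]
    ring
  unfold lap
  rw [Finset.sum_congr rfl (fun i _ => hd2 _ _)]
  rw [Finset.sum_add_distrib]
  have h1 : ∑ i : Fin 3, (g' ‖x‖ * ‖x‖⁻¹) * ⟪EuclideanSpace.single i (1:ℝ), EuclideanSpace.single i (1:ℝ)⟫ = 3 * (g' ‖x‖ * ‖x‖⁻¹) := by
    have : ∀ i : Fin 3, ⟪EuclideanSpace.single i (1:ℝ), EuclideanSpace.single i (1:ℝ)⟫ = (1:ℝ) := by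
      intro i
      rw [EuclideanSpace.inner_single_right]
      simp [EuclideanSpace.single_apply]
    simp [this]
  rw [h1]
  have h2' : ∑ i : Fin 3, ((g'' ‖x‖ * ‖x‖⁻¹ + g' ‖x‖ * -(‖x‖ ^ 2)⁻¹) * ‖x‖⁻¹) * ⟪x, EuclideanSpace.single i (1:ℝ)⟫ * ⟪x, EuclideanSpace.single i (1:ℝ)⟫
      = ((g'' ‖x‖ * ‖x‖⁻¹ + g' ‖x‖ * -(‖x‖ ^ 2)⁻¹) * ‖x‖⁻¹) * ‖x‖ ^ 2 := by
    rw [← hsum1, Finset.mul_sum]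
    congr 1
    funext i
    ring
  rw [h2']
  field_simp
  ring

lemma lap_sub (f₁ f₂ : En 3 → ℝ) (x : En 3)
    (h₁ : ContDiffAt ℝ 2 f₁ x) (h₂ : ContDiffAt ℝ 2 f₂ x) :
    lap (fun y => f₁ y - f₂ y) x = lap f₁ x - lap f₂ x := by
  have e₁ : ∀ᶠ y in 𝓝 x, ContDiffAt ℝ 2 f₁ y := h₁.eventually (by norm_num)
  have e₂ : ∀ᶠ y in 𝓝 x, ContDiffAt ℝ 2 f₂ y := h₂.eventually (by norm_num)
  have hev : fderiv ℝ (fun y => f₁ y - f₂ y) =ᶠ[𝓝 x]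
      fun y => fderiv ℝ f₁ y - fderiv ℝ f₂ y := by
    filter_upwards [e₁, e₂] with y hy₁ hy₂
    exact fderiv_fun_sub (hy₁.differentiableAt two_ne_zero) (hy₂.differentiableAt two_ne_zero)
  have d₁ : DifferentiableAt ℝ (fderiv ℝ f₁) x :=
    (h₁.fderiv_right (m := 1) (by norm_num)).differentiableAt one_ne_zero
  have d₂ : DifferentiableAt ℝ (fderiv ℝ f₂) x :=
    (h₂.fderiv_right (m := 1) (by norm_num)).differentiableAt one_ne_zero
  have key : fderiv ℝ (fderiv ℝ (fun y => f₁ y - f₂ y)) x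
      = fderiv ℝ (fderiv ℝ f₁) x - fderiv ℝ (fderiv ℝ f₂) x := by
    rw [hev.fderiv_eq]
    exact fderiv_fun_sub d₁ d₂
  unfold lap
  rw [← Finset.sum_sub_distrib]
  congr 1
  funext i
  rw [d2_eq, d2_eq, d2_eq, key]
  simp

set_option maxHeartbeats 1000000 in
lemma lap_nonneg_isLocalMin (f : En 3 → ℝ) (x : En 3)
    (hf : ContDiffAt ℝ 2 f x) (hmin : IsLocalMin f x) : 0 ≤ lap f x := by
  set G := fderiv ℝ f with hG
  have hGd : DifferentiableAt ℝ G x :=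
    (hf.fderiv_right (m := 1) (by norm_num)).differentiableAt one_ne_zero
  have hGx : G x = 0 := hmin.fderiv_eq_zero
  have hd : ∀ᶠ y in 𝓝 x, DifferentiableAt ℝ f y := by
    filter_upwards [hf.eventually (by norm_num)] with y hy
    exact hy.differentiableAt two_ne_zero
  have claim : ∀ v : En 3, 0 ≤ fderiv ℝ G x v v := by
    intro v
    by_contra hneg
    push_neg at hneg
    have hv : v ≠ 0 := by
      rintro rfl
      simp at hneg
    have hvn : (0:ℝ) < ‖v‖ := norm_pos_iff.mpr hv
    set φ : ℝ → ℝ := fun t => f (x + t • v) with hφdef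
    set ψ₁ : ℝ → ℝ := fun t => G (x + t • v) v with hψ₁def
    -- derivative of ψ₁ at 0
    have hline : ∀ t : ℝ, HasDerivAt (fun s : ℝ => x + s • v) v t := by
      intro t
      simpa using ((hasDerivAt_id t).smul_const v).const_add x
    have hx0 : x + (0:ℝ) • v = x := by simp
    have happly : HasFDerivAt (fun y => G y v)
        ((ContinuousLinearMap.apply ℝ ℝ v).comp (fderiv ℝ G x)) x :=
      ((ContinuousLinearMap.apply ℝ ℝ v).hasFDerivAt).comp x hGd.hasFDerivAt
    have hψ₁ : HasDerivAt ψ₁ (fderiv ℝ G x v v) 0 := by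
      rw [← hx0] at happly
      have := happly.comp_hasDerivAt (0:ℝ) (hline 0)
      rwa [hx0] at this
    have hψ₁0 : ψ₁ 0 = 0 := by simp [hψ₁def, hx0, hGx]
    -- slope eventually negative
    have hslope := hasDerivAt_iff_tendsto_slope.mp hψ₁
    have hslneg : ∀ᶠ t in 𝓝[≠] (0:ℝ), slope ψ₁ 0 t < 0 :=
      hslope.eventually_lt_const hneg
    obtain ⟨ε₃, hε₃, hsl⟩ := Metric.eventually_nhds_iff.mp (eventually_nhdsWithin_iff.mp hslneg)
    obtain ⟨ε₁, hε₁, hball⟩ := Metric.eventually_nhds_iff.mp hd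
    obtain ⟨ε₂, hε₂, hminb⟩ := Metric.eventually_nhds_iff.mp (hmin : ∀ᶠ y in 𝓝 x, f x ≤ f y)
    set δ : ℝ := min (ε₃/2) (min ε₁ ε₂ / (2*‖v‖)) with hδdef
    have hδ : 0 < δ := by positivity
    have hmem : ∀ t : ℝ, |t| ≤ δ → dist (x + t • v) x < min ε₁ ε₂ := by
      intro t ht
      have : dist (x + t • v) x = |t| * ‖v‖ := by
        rw [dist_eq_norm]
        simp [norm_smul]
      rw [this]
      have h1 : |t| * ‖v‖ ≤ δ * ‖v‖ := by nlinarith [abs_nonneg t]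
      have h2 : δ * ‖v‖ ≤ (min ε₁ ε₂ / (2*‖v‖)) * ‖v‖ := by
        have := min_le_right (ε₃/2) (min ε₁ ε₂ / (2*‖v‖))
        nlinarith
      have h3 : (min ε₁ ε₂ / (2*‖v‖)) * ‖v‖ = min ε₁ ε₂ / 2 := by
        field_simp
      have h4 : min ε₁ ε₂ / 2 < min ε₁ ε₂ := by
        have : (0:ℝ) < min ε₁ ε₂ := lt_min hε₁ hε₂
        linarith
      linarith
    have hφ : ∀ t : ℝ, |t| ≤ δ → HasDerivAt φ (ψ₁ t) t := by
      intro t ht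
      have hdf : DifferentiableAt ℝ f (x + t • v) :=
        hball (lt_of_lt_of_le (hmem t ht) (min_le_left _ _))
      have := hdf.hasFDerivAt.comp_hasDerivAt t (hline t)
      exact this
    have hcont : ContinuousOn φ (Set.Icc 0 δ) := by
      intro t ht
      have : |t| ≤ δ := by
        rw [abs_le]
        exact ⟨by linarith [ht.1], ht.2⟩
      exact ((hφ t this).continuousAt).continuousWithinAt
    have hderneg : ∀ t ∈ Set.Ioo (0:ℝ) δ, deriv φ t < 0 := by
      intro t ht
      have habs : |t| ≤ δ := by
        rw [abs_le]
        exact ⟨by linarith [ht.1], ht.2.le⟩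
      rw [(hφ t habs).deriv]
      have hts : t ∈ Metric.ball (0:ℝ) ε₃ \ {0} := by
        constructor
        · simp only [Metric.mem_ball, Real.dist_eq, sub_zero]
          have : δ ≤ ε₃/2 := min_le_left _ _
          have := abs_le.mpr ⟨by linarith [ht.1], ht.2.le⟩
          calc |t| ≤ δ := this
          _ ≤ ε₃/2 := min_le_left _ _
          _ < ε₃ := by linarith
        · simp [ht.1.ne']
      have hsl' := hsl (by simpa [Real.dist_eq, sub_zero] using hts.1) (by simpa using ht.1.ne')
      have : slope ψ₁ 0 t = ψ₁ t / t := by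
        rw [slope_def_field]
        simp [hψ₁0]
      rw [this] at hsl'
      have := (div_neg_iff.mp hsl')
      rcases this with ⟨h, hpos'⟩ | ⟨h, hneg'⟩
      · linarith [ht.1]
      · exact h
    have hanti := strictAntiOn_of_deriv_neg (convex_Icc 0 δ) hcont
      (fun t ht => hderneg t (by rwa [interior_Icc] at ht))
    have h1 : φ δ < φ 0 :=
      hanti (Set.left_mem_Icc.mpr hδ.le) (Set.right_mem_Icc.mpr hδ.le) hδ
    have h2 : φ 0 ≤ φ δ := by
      have hm := hminb
        (lt_of_lt_of_le (hmem δ (by rw [abs_of_pos hδ])) (min_le_right _ _))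
      simpa [hφdef, hx0] using hm
    linarith
  unfold lap
  apply Finset.sum_nonneg
  intro i _
  rw [d2_eq]
  exact claim _

lemma hasDerivAt_exp_neg (c r : ℝ) :
    HasDerivAt (fun s : ℝ => Real.exp (-c*s)) (-c * Real.exp (-c*r)) r := by
  have h := ((hasDerivAt_id r).const_mul (-c)).exp
  refine h.congr_deriv ?_
  simp only [id_eq]
  ring

lemma hasDerivAt_bar1 (a r : ℝ) :
    HasDerivAt (fun s : ℝ => (1+s) * Real.exp (-a*s))
      ((1 - a - a*r) * Real.exp (-a*r)) r := by
  have h := (((hasDerivAt_id r).const_add 1)).mul (hasDerivAt_exp_neg a r)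
  refine h.congr_deriv ?_
  simp only [id_eq]
  ring

lemma hasDerivAt_bar1' (a r : ℝ) :
    HasDerivAt (fun s : ℝ => (1 - a - a*s) * Real.exp (-a*s))
      ((a^2*(1+r) - 2*a) * Real.exp (-a*r)) r := by
  have h1 : HasDerivAt (fun s : ℝ => 1 - a - a*s) (-a) r := by
    have := ((hasDerivAt_id r).const_mul a).const_sub (1-a)
    refine this.congr_deriv ?_
    ring
  have h := h1.mul (hasDerivAt_exp_neg a r)
  refine h.congr_deriv ?_
  ring

lemma hasDerivAt_bar2' (c r : ℝ) :
    HasDerivAt (fun s : ℝ => -c * Real.exp (-c*s)) (c^2 * Real.exp (-c*r)) r := by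
  have h := (hasDerivAt_exp_neg c r).const_mul (-c)
  refine h.congr_deriv ?_
  ring

lemma hasDerivAt_barrier (A ε a c r : ℝ) :
    HasDerivAt (fun s : ℝ => A * ((1+s) * Real.exp (-a*s)) + ε * Real.exp (-c*s))
      (A * ((1 - a - a*r) * Real.exp (-a*r)) + ε * (-c * Real.exp (-c*r))) r := by
  have h1 := (hasDerivAt_bar1 a r).const_mul A
  have h2 := (hasDerivAt_exp_neg c r).const_mul ε
  exact h1.add h2

lemma hasDerivAt_barrier' (A ε a c r : ℝ) :
    HasDerivAt (fun s : ℝ => A * ((1 - a - a*s) * Real.exp (-a*s)) + ε * (-c * Real.exp (-c*s)))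
      (A * ((a^2*(1+r) - 2*a) * Real.exp (-a*r)) + ε * (c^2 * Real.exp (-c*r))) r := by
  have h1 := (hasDerivAt_bar1' a r).const_mul A
  have h2 := (hasDerivAt_bar2' c r).const_mul ε
  exact h1.add h2

lemma contDiff_barrier (A ε a c : ℝ) :
    ContDiff ℝ 2 (fun s : ℝ => A * ((1+s) * Real.exp (-a*s)) + ε * Real.exp (-c*s)) := by
  have h1 : ContDiff ℝ 2 (fun s : ℝ => Real.exp (-a*s)) :=
    Real.contDiff_exp.comp (contDiff_const.mul contDiff_id)
  have h2 : ContDiff ℝ 2 (fun s : ℝ => Real.exp (-c*s)) :=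
    Real.contDiff_exp.comp (contDiff_const.mul contDiff_id)
  exact ((contDiff_const.mul
    ((contDiff_const.add contDiff_id).mul h1))).add (contDiff_const.mul h2)

lemma eventually_cocompact_radius {P : En 3 → Prop}
    (h : ∀ᶠ x in cocompact (En 3), P x) :
    ∃ R : ℝ, ∀ x : En 3, R ≤ ‖x‖ → P x := by
  obtain ⟨K, hK, hKP⟩ := mem_cocompact.mp h
  obtain ⟨r, hr⟩ := hK.isBounded.subset_closedBall 0
  refine ⟨r + 1, fun x hx => ?_⟩
  apply hKP
  intro hxK
  have := hr hxK
  rw [Metric.mem_closedBall, dist_zero_right] at this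
  linarith

end AuxLemmas



/-- Pointwise bounds on `U` derived from the decay estimate. -/
lemma ptbound (a nu C₀ lam u r : ℝ) (ha : 0 < a) (hnu : 0 < nu) (hC₀ : 0 < C₀)
    (ha2 : a^2 = lam) (hr1 : 1 ≤ r) (hu0 : 0 < u)
    (hE : u * Real.exp (a*r) * r ≤ 2*C₀)
    (hb : 24*nu*C₀^2/a^3 ≤ r) (hc : 24*nu*C₀^2/(a^2*lam) ≤ r) :
    u ≤ 2*C₀*Real.exp (-(a*r))/r ∧ 3*nu*u^2*(1+r) ≤ a ∧ 3*nu*u^2 ≤ lam/2 := by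
  have hr0 : (0:ℝ) < r := by linarith
  have hexp : (0:ℝ) < Real.exp (a*r) := Real.exp_pos _
  have hkey : u * r * Real.exp (a*r) ≤ 2*C₀ := by nlinarith
  have hU1 : u ≤ 2*C₀*Real.exp (-(a*r))/r := by
    rw [Real.exp_neg]
    calc u = (u * r * Real.exp (a*r)) * ((Real.exp (a*r))⁻¹ / r) := by
          field_simp
      _ ≤ (2*C₀) * ((Real.exp (a*r))⁻¹ / r) :=
          mul_le_mul_of_nonneg_right hkey (div_nonneg (inv_nonneg.mpr hexp.le) (by linarith))
      _ = 2*C₀*(Real.exp (a*r))⁻¹/r := by ring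
  have har : a*r + 1 ≤ Real.exp (a*r) := Real.add_one_le_exp _
  have harpos : (0:ℝ) < a*r := mul_pos ha hr0
  have hU2 : u ≤ 2*C₀/(a*r*r) := by
    have hinv : (Real.exp (a*r))⁻¹ ≤ (a*r)⁻¹ := by
      apply inv_anti₀ harpos
      linarith
    have hU1' : u ≤ 2*C₀*(Real.exp (a*r))⁻¹/r := by rwa [Real.exp_neg] at hU1
    calc u ≤ 2*C₀*(Real.exp (a*r))⁻¹/r := hU1'
      _ ≤ 2*C₀*(a*r)⁻¹/r := by gcongr
      _ = 2*C₀/(a*r*r) := by field_simp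
  have hsq : u^2 ≤ 4*C₀^2/(a^2*r^4) := by
    have := pow_le_pow_left₀ hu0.le hU2 2
    calc u^2 ≤ (2*C₀/(a*r*r))^2 := this
      _ = 4*C₀^2/(a^2*r^4) := by field_simp; ring
  have ha3 : (0:ℝ) < a^3 := pow_pos ha 3
  have hlam0 : (0:ℝ) < lam := ha2 ▸ pow_pos ha 2
  have h24 : (0:ℝ) ≤ 24*nu*C₀^2 :=
    mul_nonneg (mul_nonneg (by norm_num) hnu.le) (sq_nonneg C₀)
  have haR3 : 24*nu*C₀^2 ≤ a^3*r := by
    rw [div_le_iff₀ ha3] at hb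
    linarith
  have haRl : 24*nu*C₀^2 ≤ a^2*lam*r := by
    rw [div_le_iff₀ (mul_pos (pow_pos ha 2) hlam0)] at hc
    linarith
  have hr3 : r ≤ r^3 := by nlinarith [sq_nonneg (r - 1), sq_nonneg (r + 1)]
  have h0 : (0:ℝ) ≤ 1+r := by linarith
  have h0' : (0:ℝ) ≤ 3*nu := by linarith
  refine ⟨hU1, ?_, ?_⟩
  · have h1 : 3*nu*u^2*(1+r) ≤ 3*nu*(4*C₀^2/(a^2*r^4))*(1+r) :=
      mul_le_mul_of_nonneg_right (mul_le_mul_of_nonneg_left hsq h0') h0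
    have h2 : 3*nu*(4*C₀^2/(a^2*r^4))*(1+r) ≤ a := by
      rw [show 3*nu*(4*C₀^2/(a^2*r^4))*(1+r) = 12*nu*C₀^2*(1+r)/(a^2*r^4) by
        ring]
      rw [div_le_iff₀ (mul_pos (pow_pos ha 2) (pow_pos hr0 4))]
      have h3 : 24*nu*C₀^2*r^3 ≤ a^3*r*r^3 :=
        mul_le_mul_of_nonneg_right haR3 (pow_nonneg hr0.le 3)
      have h4 : 24*nu*C₀^2*r ≤ 24*nu*C₀^2*r^3 :=
        mul_le_mul_of_nonneg_left hr3 h24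
      nlinarith
    linarith
  · have h1 : 3*nu*u^2 ≤ 3*nu*(4*C₀^2/(a^2*r^4)) :=
      mul_le_mul_of_nonneg_left hsq h0'
    have h2 : 3*nu*(4*C₀^2/(a^2*r^4)) ≤ lam/2 := by
      rw [show 3*nu*(4*C₀^2/(a^2*r^4)) = 12*nu*C₀^2/(a^2*r^4) by ring]
      rw [div_le_iff₀ (mul_pos (pow_pos ha 2) (pow_pos hr0 4))]
      have h3 : 24*nu*C₀^2*r^3 ≤ a^2*lam*r*r^3 :=
        mul_le_mul_of_nonneg_right haRl (pow_nonneg hr0.le 3)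
      have h4 : 24*nu*C₀^2*r ≤ 24*nu*C₀^2*r^3 :=
        mul_le_mul_of_nonneg_left hr3 h24
      nlinarith
    linarith

/-- The barrier is a supersolution in the far region. -/
lemma supersol (lam a c A ε r p u C₀ : ℝ) (ha : 0 < a) (ha2 : a^2 = lam)
    (hc : 0 < c) (hc2 : c^2 ≤ lam/2) (hε : 0 < ε) (hA : 0 < A) (hC₀ : 0 < C₀)
    (hr1 : 1 ≤ r) (h2ra : 2/r ≤ a) (hp0 : 0 ≤ p) (hp1 : p*(1+r) ≤ a)
    (hp2 : p ≤ lam/2) (hu : u ≤ 2*C₀*Real.exp (-(a*r))/r) (haA : C₀ ≤ a*A) :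
    (A * ((a^2*(1+r) - 2*a) * Real.exp (-a*r)) + ε * (c^2 * Real.exp (-c*r)))
    + 2/r * (A * ((1 - a - a*r) * Real.exp (-a*r)) + ε * (-c * Real.exp (-c*r)))
    - (lam - p) * (A * ((1+r) * Real.exp (-a*r)) + ε * Real.exp (-c*r))
    + u ≤ 0 := by
  have hr0 : (0:ℝ) < r := by linarith
  have hEpos : (0:ℝ) < Real.exp (-a*r) := Real.exp_pos _
  have hBpos : (0:ℝ) < Real.exp (-c*r) := Real.exp_pos _
  have hid : (A * ((a^2*(1+r) - 2*a) * Real.exp (-a*r)) + ε * (c^2 * Real.exp (-c*r)))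
      + 2/r * (A * ((1 - a - a*r) * Real.exp (-a*r)) + ε * (-c * Real.exp (-c*r)))
      - (lam - p) * (A * ((1+r) * Real.exp (-a*r)) + ε * Real.exp (-c*r))
      + u
      = Real.exp (-a*r) * (A * (-4*a + 2/r - 2*a/r + p*(1+r)))
        + Real.exp (-c*r) * (ε * (c^2 - 2*c/r - lam + p)) + u := by
    rw [← ha2]
    field_simp
    ring
  rw [hid]
  have hApart : -4*a + 2/r - 2*a/r + p*(1+r) ≤ -2*a := by
    have h1 : (0:ℝ) ≤ 2*a/r := div_nonneg (by linarith) (by linarith)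
    linarith
  have hBpart : c^2 - 2*c/r - lam + p ≤ 0 := by
    have h1 : (0:ℝ) ≤ 2*c/r := div_nonneg (by linarith) (by linarith)
    linarith
  have t1 : Real.exp (-a*r) * (A * (-4*a + 2/r - 2*a/r + p*(1+r)))
      ≤ Real.exp (-a*r) * (A * (-2*a)) := by
    apply mul_le_mul_of_nonneg_left _ hEpos.le
    exact mul_le_mul_of_nonneg_left hApart hA.le
  have t2 : Real.exp (-c*r) * (ε * (c^2 - 2*c/r - lam + p)) ≤ 0 :=
    mul_nonpos_of_nonneg_of_nonpos hBpos.le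
      (mul_nonpos_of_nonneg_of_nonpos hε.le hBpart)
  have hubd : u ≤ 2*C₀*Real.exp (-a*r) := by
    have h1 : u ≤ 2*C₀*Real.exp (-(a*r)) := by
      calc u ≤ 2*C₀*Real.exp (-(a*r))/r := hu
        _ ≤ 2*C₀*Real.exp (-(a*r)) := div_le_self (mul_nonneg (by linarith) (Real.exp_pos _).le) hr1
    rwa [show -(a*r) = -a*r by ring] at h1
  have t3 : Real.exp (-a*r) * (A * (-2*a)) + 2*C₀*Real.exp (-a*r) ≤ 0 := by
    nlinarith [mul_le_mul_of_nonneg_left haA hEpos.le]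
  linarith

set_option maxHeartbeats 1000000 in
/-- Comparison principle on an annulus. -/
lemma annulus_min (ψ : En 3 → ℝ) (hψC2 : ContDiff ℝ 2 ψ)
    (g g' g'' : ℝ → ℝ) (hgC : ContDiff ℝ 2 g)
    (hg : ∀ r : ℝ, HasDerivAt g (g' r) r) (hg' : ∀ r : ℝ, HasDerivAt g' (g'' r) r)
    (q f : En 3 → ℝ)
    (hψlap : ∀ x : En 3, lap ψ x = q x * ψ x - f x)
    (R S : ℝ) (hR : 0 < R) (hRS : R < S)
    (hq : ∀ x : En 3, R ≤ ‖x‖ → 0 < q x)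
    (hsuper : ∀ x : En 3, R ≤ ‖x‖ →
      g'' ‖x‖ + 2/‖x‖ * g' ‖x‖ - q x * g ‖x‖ + f x ≤ 0)
    (hbR : ∀ x : En 3, ‖x‖ = R → ψ x ≤ g R)
    (hbS : ∀ x : En 3, ‖x‖ = S → ψ x ≤ g S) :
    ∀ y : En 3, R ≤ ‖y‖ → ‖y‖ ≤ S → ψ y ≤ g ‖y‖ := by
  set w : En 3 → ℝ := fun y => g ‖y‖ - ψ y with hw_def
  have hwcont : Continuous w :=
    (hgC.continuous.comp continuous_norm).sub hψC2.continuous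
  set K := Metric.closedBall (0:En 3) S \ Metric.ball (0:En 3) R with hK_def
  have hKc : IsCompact K := (isCompact_closedBall _ _).diff Metric.isOpen_ball
  have hKne : K.Nonempty := by
    refine ⟨R • EuclideanSpace.single (0:Fin 3) (1:ℝ), ?_, ?_⟩
    · rw [Metric.mem_closedBall, dist_zero_right, norm_smul,
        EuclideanSpace.norm_single, Real.norm_eq_abs, abs_of_pos hR]
      simpa using hRS.le
    · rw [Metric.mem_ball, dist_zero_right, norm_smul,
        EuclideanSpace.norm_single, Real.norm_eq_abs, abs_of_pos hR]
      simp
  have hmain : ∀ y : En 3, y ∈ K → 0 ≤ w y := by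
    obtain ⟨x₀, hx₀K, hx₀min⟩ := hKc.exists_isMinOn hKne hwcont.continuousOn
    rcases le_or_gt 0 (w x₀) with hge | hlt
    · intro y hy
      exact le_trans hge (hx₀min hy)
    · exfalso
      have hx₀S : ‖x₀‖ ≤ S := by
        have := hx₀K.1
        rwa [Metric.mem_closedBall, dist_zero_right] at this
      have hx₀R : R ≤ ‖x₀‖ := by
        have := hx₀K.2
        rw [Metric.mem_ball, dist_zero_right] at this
        linarith [not_lt.mp this]
      have hRlt : R < ‖x₀‖ := by
        rcases lt_or_eq_of_le hx₀R with h | h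
        · exact h
        · exfalso
          have := hbR x₀ h.symm
          have hw0 : w x₀ = g R - ψ x₀ := by rw [hw_def]; simp [← h]
          rw [hw0] at hlt
          linarith
      have hSgt : ‖x₀‖ < S := by
        rcases lt_or_eq_of_le hx₀S with h | h
        · exact h
        · exfalso
          have := hbS x₀ h
          have hw0 : w x₀ = g S - ψ x₀ := by rw [hw_def]; simp [h]
          rw [hw0] at hlt
          linarith
      have hopen : IsOpen {y : En 3 | R < ‖y‖ ∧ ‖y‖ < S} :=
        (isOpen_lt continuous_const continuous_norm).inter
          (isOpen_lt continuous_norm continuous_const)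
      have hsub : {y : En 3 | R < ‖y‖ ∧ ‖y‖ < S} ⊆ K := by
        intro y hy
        refine ⟨?_, ?_⟩
        · rw [Metric.mem_closedBall, dist_zero_right]
          exact hy.2.le
        · rw [Metric.mem_ball, dist_zero_right]
          exact not_lt.mpr hy.1.le
      have hnhds : K ∈ 𝓝 x₀ :=
        Filter.mem_of_superset (hopen.mem_nhds ⟨hRlt, hSgt⟩) hsub
      have hlocmin : IsLocalMin w x₀ := hx₀min.isLocalMin hnhds
      have hx₀ne : x₀ ≠ 0 := by
        intro h0
        rw [h0, norm_zero] at hRlt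
        linarith
      have hgCx : ContDiffAt ℝ 2 (fun y : En 3 => g ‖y‖) x₀ :=
        hgC.contDiffAt.comp x₀ (contDiffAt_norm ℝ hx₀ne)
      have hwC : ContDiffAt ℝ 2 w x₀ := hgCx.sub hψC2.contDiffAt
      have hlap := lap_nonneg_isLocalMin w x₀ hwC hlocmin
      have hlapw : lap w x₀ = lap (fun y : En 3 => g ‖y‖) x₀ - lap ψ x₀ :=
        lap_sub _ _ x₀ hgCx hψC2.contDiffAt
      have hlapg : lap (fun y : En 3 => g ‖y‖) x₀ = g'' ‖x₀‖ + 2/‖x₀‖ * g' ‖x₀‖ :=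
        lap_radial g g' g'' (fun r _ => hg r) (fun r _ => hg' r) x₀ hx₀ne
      rw [hlapw, hlapg, hψlap x₀] at hlap
      have hψgt : g ‖x₀‖ < ψ x₀ := by
        have hw0 : w x₀ = g ‖x₀‖ - ψ x₀ := rfl
        rw [hw0] at hlt
        linarith
      have hqpos := hq x₀ hRlt.le
      have hsup := hsuper x₀ hRlt.le
      nlinarith [mul_lt_mul_of_pos_left hψgt hqpos]
  intro y h1 h2
  have hy : y ∈ K := by
    refine ⟨?_, ?_⟩
    · rw [Metric.mem_closedBall, dist_zero_right]; exact h2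
    · rw [Metric.mem_ball, dist_zero_right]; exact not_lt.mpr h1
  have := hmain y hy
  have hw0 : w y = g ‖y‖ - ψ y := rfl
  linarith [hw0 ▸ this]

set_option maxHeartbeats 2000000 in
/-- Remark 2.4 (decay of `ψ`): if `ψ` is a radial solution of
`-Δψ + (λ - 3νU²)ψ = U` on `ℝ³` with a crude exponential bound, then
`ψ(x) ≤ C(1 + |x|)e^{-√λ|x|}`. -/
theorem statement5
    (lam nu : ℝ) (hlam : 0 < lam) (hnu : 0 < nu)
    (U : En 3 → ℝ) (hU : groundState U lam nu) (hUd : solDecay U lam)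
    (ψ : En 3 → ℝ) (hψrad : radialFn ψ) (hψC2 : ContDiff ℝ 2 ψ)
    (hψeq : ∀ x, -lap ψ x + (lam - 3 * nu * U x ^ 2) * ψ x = U x)
    (γ R₀ : ℝ) (hγ : 0 < γ) (hγlam : γ < lam) (hR₀ : 0 < R₀)
    (hψbd : ∀ x : En 3, R₀ ≤ ‖x‖ →
      0 < ψ x ∧ ψ x < Real.exp (-Real.sqrt γ * ‖x‖)) :
    ∃ C > (0:ℝ), ∀ x : En 3,
      ψ x ≤ C * (1 + ‖x‖) * Real.exp (-Real.sqrt lam * ‖x‖) := by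
  classical
  obtain ⟨hUC2, hUpos, hUrad, hUH1, hUeq⟩ := hU
  obtain ⟨C₀, hC₀, htend⟩ := hUd
  set a := Real.sqrt lam with ha_def
  have ha : 0 < a := Real.sqrt_pos.mpr hlam
  have ha2 : a^2 = lam := Real.sq_sqrt hlam.le
  set c : ℝ := Real.sqrt γ / 2 with hc_def
  have hsγ : 0 < Real.sqrt γ := Real.sqrt_pos.mpr hγ
  have hsγ2 : Real.sqrt γ ^ 2 = γ := Real.sq_sqrt hγ.le
  have hc : 0 < c := by rw [hc_def]; positivity
  have hc2 : c^2 ≤ lam/2 := by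
    have hcsq : c^2 = γ/4 := by rw [hc_def, div_pow, hsγ2]; norm_num
    rw [hcsq]; nlinarith
  have hUev : ∀ᶠ x in cocompact (En 3), U x * Real.exp (a*‖x‖) * ‖x‖ < 2*C₀ := by
    have h2 := htend.eventually_lt_const (show C₀ < 2*C₀ by linarith)
    filter_upwards [h2] with x hx
    have h3 : ((((3:ℕ):ℝ)) - 1)/2 = (1:ℝ) := by norm_num
    rw [h3, Real.rpow_one] at hx
    exact hx
  obtain ⟨R₁, hR₁⟩ := eventually_cocompact_radius hUev
  set R : ℝ := |R₁| + R₀ + 1 + 2/a + 24*nu*C₀^2/a^3 + 24*nu*C₀^2/(a^2*lam) with hR_def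
  have hn1 : (0:ℝ) ≤ |R₁| := abs_nonneg _
  have hn2 : (0:ℝ) < 2/a := by positivity
  have hn3 : (0:ℝ) ≤ 24*nu*C₀^2/a^3 := by positivity
  have hn4 : (0:ℝ) ≤ 24*nu*C₀^2/(a^2*lam) := by positivity
  have hRpos : 0 < R := by rw [hR_def]; linarith
  have hRR₀ : R₀ ≤ R := by rw [hR_def]; linarith
  have hRR₁ : R₁ ≤ R := by rw [hR_def]; linarith [le_abs_self R₁, hR₀]
  have hR1 : 1 ≤ R := by rw [hR_def]; linarith
  have hRa : 2/a ≤ R := by rw [hR_def]; linarith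
  have hRb : 24*nu*C₀^2/a^3 ≤ R := by rw [hR_def]; linarith
  have hRc : 24*nu*C₀^2/(a^2*lam) ≤ R := by rw [hR_def]; linarith
  have facts : ∀ x : En 3, R ≤ ‖x‖ →
      U x ≤ 2*C₀*Real.exp (-(a*‖x‖))/‖x‖ ∧ 3*nu*U x^2*(1+‖x‖) ≤ a ∧
        3*nu*U x^2 ≤ lam/2 :=
    fun x hx => ptbound a nu C₀ lam (U x) ‖x‖ ha hnu hC₀ ha2 (le_trans hR1 hx)
      (hUpos x) (hR₁ x (le_trans hRR₁ hx)).le (le_trans hRb hx) (le_trans hRc hx)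
  set A : ℝ := C₀/a + Real.exp (a*R) with hA_def
  have hApos : 0 < A := by rw [hA_def]; positivity
  have haA : C₀ ≤ a*A := by
    rw [hA_def, mul_add, mul_div_cancel₀ _ ha.ne']
    nlinarith [Real.exp_pos (a*R)]
  have hA1 : Real.exp (a*R) ≤ A := by
    rw [hA_def]
    have : 0 < C₀/a := by positivity
    linarith
  have hψlap : ∀ x : En 3, lap ψ x = (lam - 3*nu*U x^2) * ψ x - U x := by
    intro x
    linarith [hψeq x]
  have hq : ∀ x : En 3, R ≤ ‖x‖ → 0 < lam - 3*nu*U x^2 := by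
    intro x hx
    have := (facts x hx).2.2
    linarith
  -- main comparison claim
  have claim : ∀ ε : ℝ, 0 < ε → ∀ x : En 3, R ≤ ‖x‖ →
      ψ x ≤ A * ((1+‖x‖) * Real.exp (-a*‖x‖)) + ε * Real.exp (-c*‖x‖) := by
    intro ε hε x hx
    set S : ℝ := max (R+1) ((-Real.log ε)/c + 1) with hS_def
    have hSR : R < S := lt_of_lt_of_le (by linarith) (le_max_left _ _)
    have hSexp : ∀ s : ℝ, S ≤ s → Real.exp (-c*s) ≤ ε := by
      intro s hs
      have h1 : (-Real.log ε)/c + 1 ≤ s := le_trans (le_max_right _ _) hs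
      have h2 : (-Real.log ε)/c ≤ s := by linarith
      rw [div_le_iff₀ hc] at h2
      calc Real.exp (-c*s) ≤ Real.exp (Real.log ε) := Real.exp_le_exp.mpr (by nlinarith)
        _ = ε := Real.exp_log hε
    have houter : ∀ y : En 3, S ≤ ‖y‖ → ψ y ≤ ε * Real.exp (-c*‖y‖) := by
      intro y hy
      have hyR₀ : R₀ ≤ ‖y‖ := by linarith [hRR₀]
      have hb := (hψbd y hyR₀).2
      have hsplit : Real.exp (-Real.sqrt γ * ‖y‖)
          = Real.exp (-c*‖y‖) * Real.exp (-c*‖y‖) := by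
        rw [← Real.exp_add]
        congr 1
        rw [hc_def]
        ring
      calc ψ y ≤ Real.exp (-Real.sqrt γ*‖y‖) := hb.le
        _ = Real.exp (-c*‖y‖) * Real.exp (-c*‖y‖) := hsplit
        _ ≤ ε * Real.exp (-c*‖y‖) :=
            mul_le_mul_of_nonneg_right (hSexp _ hy) (Real.exp_nonneg _)
    have hsuper : ∀ y : En 3, R ≤ ‖y‖ →
        (A * ((a^2*(1+‖y‖) - 2*a) * Real.exp (-a*‖y‖)) + ε * (c^2 * Real.exp (-c*‖y‖)))
        + 2/‖y‖ * (A * ((1 - a - a*‖y‖) * Real.exp (-a*‖y‖)) + ε * (-c * Real.exp (-c*‖y‖)))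
        - (lam - 3*nu*U y^2) * (A * ((1+‖y‖) * Real.exp (-a*‖y‖)) + ε * Real.exp (-c*‖y‖))
        + U y ≤ 0 := by
      intro y hy
      obtain ⟨hU1, f2, f3⟩ := facts y hy
      have hr1 : 1 ≤ ‖y‖ := le_trans hR1 hy
      have h2ra : 2/‖y‖ ≤ a := by
        rw [div_le_iff₀ (by linarith : (0:ℝ) < ‖y‖)]
        have h1 := le_trans hRa hy
        rw [div_le_iff₀ ha] at h1
        linarith
      exact supersol lam a c A ε ‖y‖ (3*nu*U y^2) (U y) C₀ ha ha2 hc hc2 hε hApos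
        hC₀ hr1 h2ra (by positivity) f2 f3 hU1 haA
    have hbdR : ∀ y : En 3, ‖y‖ = R →
        ψ y ≤ A * ((1+R) * Real.exp (-a*R)) + ε * Real.exp (-c*R) := by
      intro y hy
      have hyR₀ : R₀ ≤ ‖y‖ := by rw [hy]; exact hRR₀
      have hψ1 : ψ y < 1 := by
        refine lt_of_lt_of_le (hψbd y hyR₀).2 (Real.exp_le_one_iff.mpr ?_)
        have : (0:ℝ) ≤ Real.sqrt γ * ‖y‖ := by positivity
        linarith
      have h1 : Real.exp (a*R) * Real.exp (-a*R) = 1 := by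
        rw [← Real.exp_add]; simp
      have hAR : 1 ≤ A * ((1+R) * Real.exp (-a*R)) := by
        nlinarith [Real.exp_pos (-a*R), hRpos,
          mul_le_mul_of_nonneg_right hA1
            (mul_pos (show (0:ℝ) < 1+R by linarith) (Real.exp_pos (-a*R))).le]
      nlinarith [mul_pos hε (Real.exp_pos (-c*R))]
    have hbdS : ∀ y : En 3, ‖y‖ = S →
        ψ y ≤ A * ((1+S) * Real.exp (-a*S)) + ε * Real.exp (-c*S) := by
      intro y hy
      have h1 := houter y (le_of_eq hy.symm)
      rw [hy] at h1
      nlinarith [mul_pos hApos (mul_pos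
          (show (0:ℝ) < 1+S by nlinarith) (Real.exp_pos (-a*S)))]
    have hcomp := annulus_min ψ hψC2
      (fun s : ℝ => A * ((1+s) * Real.exp (-a*s)) + ε * Real.exp (-c*s))
      (fun s : ℝ => A * ((1 - a - a*s) * Real.exp (-a*s)) + ε * (-c * Real.exp (-c*s)))
      (fun s : ℝ => A * ((a^2*(1+s) - 2*a) * Real.exp (-a*s)) + ε * (c^2 * Real.exp (-c*s)))
      (contDiff_barrier A ε a c)
      (hasDerivAt_barrier A ε a c) (hasDerivAt_barrier' A ε a c)
      (fun y => lam - 3*nu*U y^2) U hψlap R S hRpos hSR hq hsuper hbdR hbdS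
    rcases le_or_gt ‖x‖ S with hxS | hxS
    · exact hcomp x hx hxS
    · have h1 := houter x hxS.le
      have h2 : 0 ≤ A * ((1+‖x‖) * Real.exp (-a*‖x‖)) := by positivity
      linarith
  -- pass to the limit ε → 0 in the far region
  have hfar : ∀ x : En 3, R ≤ ‖x‖ → ψ x ≤ A * ((1+‖x‖) * Real.exp (-a*‖x‖)) := by
    intro x hx
    apply le_of_forall_pos_le_add
    intro δ hδ
    have hεpos : 0 < δ * Real.exp (c*‖x‖) := by positivity
    have h := claim (δ * Real.exp (c*‖x‖)) hεpos x hx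
    have hcancel : δ * Real.exp (c*‖x‖) * Real.exp (-c*‖x‖) = δ := by
      rw [mul_assoc, ← Real.exp_add]
      simp
    rw [hcancel] at h
    exact h
  -- near region
  have hball : ∃ M : ℝ, ∀ x : En 3, ‖x‖ ≤ R → ψ x ≤ M := by
    obtain ⟨xm, _, hxm⟩ := (isCompact_closedBall (0:En 3) R).exists_isMaxOn
      ⟨0, by simp [hRpos.le]⟩ hψC2.continuous.continuousOn
    refine ⟨ψ xm, fun x hx => ?_⟩
    exact hxm (by rw [Metric.mem_closedBall, dist_zero_right]; exact hx)
  obtain ⟨M, hM⟩ := hball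
  refine ⟨A + (max M 0 + 1) * Real.exp (a*R), by positivity, ?_⟩
  intro x
  have hexpR : (0:ℝ) < Real.exp (a*R) := Real.exp_pos _
  have hexpx : (0:ℝ) < Real.exp (-a*‖x‖) := Real.exp_pos _
  have hMx : (0:ℝ) < (max M 0 + 1) * Real.exp (a*R) := by positivity
  rcases le_or_gt R ‖x‖ with hx | hx
  · have h1 := hfar x hx
    have h2 : 0 ≤ (1+‖x‖) * Real.exp (-a*‖x‖) := by positivity
    calc ψ x ≤ A * ((1+‖x‖) * Real.exp (-a*‖x‖)) := h1
      _ ≤ (A + (max M 0 + 1) * Real.exp (a*R)) * ((1+‖x‖) * Real.exp (-a*‖x‖)) := by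
          nlinarith
      _ = (A + (max M 0 + 1) * Real.exp (a*R)) * (1+‖x‖) * Real.exp (-a*‖x‖) := by
          ring
  · have h1 := hM x hx.le
    have h2 : ψ x ≤ max M 0 := le_trans h1 (le_max_left _ _)
    have h3 : (1:ℝ) ≤ Real.exp (a*R) * Real.exp (-a*‖x‖) := by
      rw [← Real.exp_add]
      apply Real.one_le_exp
      nlinarith
    have h4 : (0:ℝ) ≤ max M 0 := le_max_right _ _
    have h5 : (1:ℝ) ≤ 1 + ‖x‖ := by linarith [norm_nonneg x]
    have h6 : max M 0 + 1 ≤ (max M 0 + 1) * (Real.exp (a*R) * Real.exp (-a*‖x‖)) := by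
      nlinarith
    have h7 : (max M 0 + 1) * (Real.exp (a*R) * Real.exp (-a*‖x‖))
        ≤ (A + (max M 0 + 1) * Real.exp (a*R)) * (1+‖x‖) * Real.exp (-a*‖x‖) := by
      nlinarith [mul_le_mul_of_nonneg_left h5 (mul_pos hMx hexpx).le,
        mul_nonneg (mul_nonneg hApos.le (show (0:ℝ) ≤ 1+‖x‖ by linarith)) hexpx.le]
    linarith
end
end

section
/- Let λ, γ, ν > 0. There exists a constant C = C(λ,γ,ν) > 0 such that for every x ∈ ℝ³ with |x| ≥ 1, ∫_{{y ∈ ℝ³ : |x−y| < |x|/2}} (e^{−√λ|x−y|}/|x−y|) · (3ν e^{−(2√λ+√γ)|y|}/|y|² + e^{−√λ|y|}/|y|) dy ≤ C |x| e^{−√λ|x|}. -/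
noncomputable section
open MeasureTheory Filter Topology

lemma ball_inv_norm (R : ℝ) (hR : 0 < R) :
    IntegrableOn (fun z : En 3 => ‖z‖⁻¹) (Metric.ball 0 R) volume ∧
      ∫ z in Metric.ball (0 : En 3) R, ‖z‖⁻¹ =
        3 * (volume (Metric.ball (0 : En 3) 1)).toReal * (R ^ 2 / 2) := by
  set V : ℝ := (volume (Metric.ball (0 : En 3) 1)).toReal with hV
  have hVpos : 0 < V := ENNReal.toReal_pos
    (Metric.measure_ball_pos volume 0 one_pos).ne' measure_ball_lt_top.ne
  set f : ℝ → ℝ := (Set.Ioo (0:ℝ) R).indicator (fun r => r⁻¹) with hf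
  have h1 : (Metric.ball (0 : En 3) R).indicator (fun z => ‖z‖⁻¹)
      = fun z => f ‖z‖ := by
    funext z
    simp only [hf, Set.indicator, Set.mem_Ioo, mem_ball_zero_iff, Set.mem_setOf_eq,
      Metric.mem_ball, dist_zero_right]
    by_cases h : ‖z‖ < R
    · by_cases h0 : 0 < ‖z‖
      · simp [h, h0]
      · have hz0 : ‖z‖ = 0 := le_antisymm (not_lt.mp h0) (norm_nonneg z)
        simp [h, h0, hz0]
    · simp [h]
  have h3 : (fun y : ℝ => y ^ (3 - 1) • f y)
      = Set.indicator (Set.Ioo (0:ℝ) R) (fun y => y) := by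
    funext y
    simp only [hf, Set.indicator, Set.mem_Ioo, smul_eq_mul]
    by_cases h : 0 < y ∧ y < R
    · simp only [h, and_self, if_true]
      have : y ≠ 0 := h.1.ne'
      field_simp
    · simp [h]
  have h4 : ∫ y in Set.Ioi (0:ℝ), y ^ (3 - 1) • f y = R ^ 2 / 2 := by
    rw [h3, setIntegral_indicator measurableSet_Ioo]
    have : Set.Ioi (0:ℝ) ∩ Set.Ioo 0 R = Set.Ioo 0 R := by
      ext t; simp [Set.mem_Ioo]
    rw [this, ← MeasureTheory.integral_Ioc_eq_integral_Ioo,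
      ← intervalIntegral.integral_of_le hR.le, integral_id]
    ring
  have h2 := MeasureTheory.integral_fun_norm_addHaar (volume : Measure (En 3)) f
  rw [finrank_euclideanSpace_fin] at h2
  rw [h4] at h2
  have hval : ∫ z : En 3, f ‖z‖ = 3 * V * (R ^ 2 / 2) := by
    rw [h2, hV, measureReal_def]; simp only [nsmul_eq_mul, smul_eq_mul, Nat.cast_ofNat]; ring
  have hpos : (0:ℝ) < 3 * V * (R ^ 2 / 2) := by positivity
  have hint : Integrable (fun z : En 3 => f ‖z‖) volume := by
    by_contra h
    rw [integral_undef h] at hval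
    exact absurd hval.symm (ne_of_gt hpos)
  rw [← h1] at hint
  have hio : IntegrableOn (fun z : En 3 => ‖z‖⁻¹) (Metric.ball 0 R) volume :=
    (integrable_indicator_iff measurableSet_ball).mp hint
  refine ⟨hio, ?_⟩
  rw [← MeasureTheory.integral_indicator measurableSet_ball, h1, hval]

set_option maxHeartbeats 1000000 in
/-- Estimate (I): the Green-function integral over the ball `{|x-y| < |x|/2}`
is bounded by `C|x|e^{-√λ|x|}`. -/
theorem statement6
    (lam gam nu : ℝ) (hlam : 0 < lam) (hgam : 0 < gam) (hnu : 0 < nu) :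
    ∃ C > (0:ℝ), ∀ x : En 3, 1 ≤ ‖x‖ →
      (∫ y in {y : En 3 | ‖x - y‖ < ‖x‖ / 2},
          (Real.exp (-Real.sqrt lam * ‖x - y‖) / ‖x - y‖) *
            (3 * nu * Real.exp (-(2 * Real.sqrt lam + Real.sqrt gam) * ‖y‖) / ‖y‖ ^ 2 +
              Real.exp (-Real.sqrt lam * ‖y‖) / ‖y‖))
        ≤ C * ‖x‖ * Real.exp (-Real.sqrt lam * ‖x‖) := by
  set V : ℝ := (volume (Metric.ball (0 : En 3) 1)).toReal with hV
  have hVpos : 0 < V := ENNReal.toReal_pos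
    (Metric.measure_ball_pos volume 0 one_pos).ne' measure_ball_lt_top.ne
  set a : ℝ := Real.sqrt lam with ha
  have ha0 : 0 ≤ a := Real.sqrt_nonneg lam
  set K : ℝ := 12 * nu + 2 with hK
  have hKpos : 0 < K := by positivity
  refine ⟨3 * K * V / 8, by positivity, ?_⟩
  intro x hx
  have hxpos : (0:ℝ) < ‖x‖ := lt_of_lt_of_le one_pos hx
  set R : ℝ := ‖x‖ / 2 with hR
  have hRpos : 0 < R := by positivity
  -- the set is a ball
  have hs : {y : En 3 | ‖x - y‖ < ‖x‖ / 2} = Metric.ball x R := by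
    ext y
    simp [Metric.mem_ball, dist_eq_norm, norm_sub_rev x y, hR]
  rw [hs]
  -- the dominating function
  set c : ℝ := K * Real.exp (-a * ‖x‖) / ‖x‖ with hc
  have hcpos : 0 < c := by positivity
  set g : En 3 → ℝ := fun y => c * ‖x - y‖⁻¹ with hg
  set F : En 3 → ℝ := fun y =>
    (Real.exp (-a * ‖x - y‖) / ‖x - y‖) *
      (3 * nu * Real.exp (-(2 * a + Real.sqrt gam) * ‖y‖) / ‖y‖ ^ 2 +
        Real.exp (-a * ‖y‖) / ‖y‖) with hFdef
  -- transporting the inverse-norm integral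
  have hMP : MeasurePreserving (fun y : En 3 => x - y) volume volume :=
    Measure.measurePreserving_sub_left volume x
  have hemb : MeasurableEmbedding (fun y : En 3 => x - y) :=
    (Homeomorph.subLeft x).measurableEmbedding
  have hpre : (fun y : En 3 => x - y) ⁻¹' (Metric.ball 0 R) = Metric.ball x R := by
    ext y
    simp [Metric.mem_ball, dist_eq_norm, norm_sub_rev x y, mem_ball_zero_iff]
  obtain ⟨hio, hival⟩ := ball_inv_norm R hRpos
  have hIntInv : IntegrableOn (fun y : En 3 => ‖x - y‖⁻¹) (Metric.ball x R) volume := by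
    have := (hMP.integrableOn_comp_preimage hemb
      (f := fun z : En 3 => ‖z‖⁻¹) (s := Metric.ball 0 R)).mpr hio
    rwa [hpre] at this
  have hIntVal : ∫ y in Metric.ball x R, ‖x - y‖⁻¹ = 3 * V * (R ^ 2 / 2) := by
    have := hMP.setIntegral_preimage_emb hemb (fun z : En 3 => ‖z‖⁻¹) (Metric.ball 0 R)
    rw [hpre] at this
    rw [this, hival]
  have hgInt : IntegrableOn g (Metric.ball x R) volume := hIntInv.const_mul c
  -- pointwise bound
  have hbound : ∀ y ∈ Metric.ball x R, F y ≤ g y := by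
    intro y hy
    have hxy : ‖x - y‖ < R := by
      rw [Metric.mem_ball, dist_eq_norm, ← norm_sub_rev x y] at hy
      exact hy
    have htri : ‖x‖ ≤ ‖x - y‖ + ‖y‖ := by
      simpa using norm_add_le (x - y) y
    have hy2 : R ≤ ‖y‖ := by
      rw [hR] at hxy ⊢; linarith
    have hy0 : 0 < ‖y‖ := lt_of_lt_of_le hRpos hy2
    have hinvy : ‖y‖⁻¹ ≤ 2 * ‖x‖⁻¹ := by
      rw [hR] at hy2
      have h1 := inv_anti₀ (by positivity : (0:ℝ) < ‖x‖ / 2) hy2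
      calc ‖y‖⁻¹ ≤ (‖x‖ / 2)⁻¹ := h1
        _ = 2 * ‖x‖⁻¹ := by field_simp
    have hinvy2 : (‖y‖ ^ 2)⁻¹ ≤ 4 * ‖x‖⁻¹ := by
      rw [hR] at hy2
      have h1 : ‖x‖ / 4 ≤ ‖y‖ ^ 2 := by nlinarith
      have h2 := inv_anti₀ (by positivity : (0:ℝ) < ‖x‖ / 4) h1
      calc (‖y‖ ^ 2)⁻¹ ≤ (‖x‖ / 4)⁻¹ := h2
        _ = 4 * ‖x‖⁻¹ := by field_simp
    have e1 : Real.exp (-(2 * a + Real.sqrt gam) * ‖y‖) ≤ Real.exp (-a * ‖y‖) :=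
      Real.exp_le_exp.mpr (by nlinarith [Real.sqrt_nonneg gam, norm_nonneg y])
    have e2 : Real.exp (-a * ‖x - y‖) * Real.exp (-a * ‖y‖) ≤ Real.exp (-a * ‖x‖) := by
      rw [← Real.exp_add]
      apply Real.exp_le_exp.mpr
      nlinarith
    have eb_pos := Real.exp_pos (-(2 * a + Real.sqrt gam) * ‖y‖)
    have ea_pos := Real.exp_pos (-a * ‖y‖)
    have exy_pos := Real.exp_pos (-a * ‖x - y‖)
    -- inner sum bound
    have hsum : 3 * nu * Real.exp (-(2 * a + Real.sqrt gam) * ‖y‖) / ‖y‖ ^ 2 +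
        Real.exp (-a * ‖y‖) / ‖y‖ ≤ K * Real.exp (-a * ‖y‖) * ‖x‖⁻¹ := by
      rw [div_eq_mul_inv, div_eq_mul_inv, hK]
      have p1 : Real.exp (-(2 * a + Real.sqrt gam) * ‖y‖) * (‖y‖ ^ 2)⁻¹ ≤
          Real.exp (-a * ‖y‖) * (4 * ‖x‖⁻¹) :=
        mul_le_mul e1 hinvy2 (by positivity) ea_pos.le
      have p2 : Real.exp (-a * ‖y‖) * ‖y‖⁻¹ ≤ Real.exp (-a * ‖y‖) * (2 * ‖x‖⁻¹) :=
        mul_le_mul_of_nonneg_left hinvy ea_pos.le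
      nlinarith
    calc F y = ‖x - y‖⁻¹ * (Real.exp (-a * ‖x - y‖) *
          (3 * nu * Real.exp (-(2 * a + Real.sqrt gam) * ‖y‖) / ‖y‖ ^ 2 +
            Real.exp (-a * ‖y‖) / ‖y‖)) := by
          rw [hFdef]; rw [div_eq_mul_inv]; ring
      _ ≤ ‖x - y‖⁻¹ * (Real.exp (-a * ‖x - y‖) * (K * Real.exp (-a * ‖y‖) * ‖x‖⁻¹)) := by
          apply mul_le_mul_of_nonneg_left _ (by positivity)
          exact mul_le_mul_of_nonneg_left hsum exy_pos.le
      _ = (Real.exp (-a * ‖x - y‖) * Real.exp (-a * ‖y‖)) * (K * ‖x‖⁻¹) * ‖x - y‖⁻¹ := by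
          ring
      _ ≤ Real.exp (-a * ‖x‖) * (K * ‖x‖⁻¹) * ‖x - y‖⁻¹ := by
          apply mul_le_mul_of_nonneg_right _ (by positivity)
          exact mul_le_mul_of_nonneg_right e2 (by positivity)
      _ = g y := by rw [hg, hc]; field_simp
  have hFmeas : AEStronglyMeasurable F (volume.restrict (Metric.ball x R)) := by
    apply Measurable.aestronglyMeasurable
    fun_prop
  have hFInt : IntegrableOn F (Metric.ball x R) volume := by
    apply Integrable.mono' hgInt hFmeas
    filter_upwards [ae_restrict_mem measurableSet_ball] with y hy
    rw [Real.norm_of_nonneg (by positivity)]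
    exact hbound y hy
  calc ∫ y in Metric.ball x R, F y ≤ ∫ y in Metric.ball x R, g y :=
        setIntegral_mono_on hFInt hgInt measurableSet_ball hbound
    _ = c * ∫ y in Metric.ball x R, ‖x - y‖⁻¹ := by
        rw [hg]; exact integral_const_mul c _
    _ = c * (3 * V * (R ^ 2 / 2)) := by rw [hIntVal]
    _ = 3 * K * V / 8 * ‖x‖ * Real.exp (-a * ‖x‖) := by
        rw [hc, hR]; field_simp; ring
end
end

section
/- Let λ, γ, ν > 0. There exists a constant C = C(λ,γ,ν) > 0 such that for every x ∈ ℝ³ with |x| ≥ 1, ∫_{{y ∈ ℝ³ : |y| < |x|/2}} (e^{−√λ|x−y|}/|x−y|) · (3ν e^{−(2√λ+√γ)|y|}/|y|² + e^{−√λ|y|}/|y|) dy ≤ C |x| e^{−√λ|x|}. -/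
noncomputable section
open MeasureTheory Filter Topology
open scoped ENNReal

open Set Metric in
lemma lintegral_fun_norm_En3 (F : ℝ → ℝ≥0∞) (hF : Measurable F) :
    ∫⁻ y : En 3, F ‖y‖ =
      (volume : Measure (En 3)).toSphere Set.univ *
        ∫⁻ r in Set.Ioi (0:ℝ), ENNReal.ofReal (r ^ 2) * F r := by
  have hdim : Module.finrank ℝ (En 3) - 1 = 2 := by
    simp [finrank_euclideanSpace]
  calc
    ∫⁻ y : En 3, F ‖y‖
        = ∫⁻ y : ({(0:En 3)}ᶜ : Set (En 3)), F ‖(y : En 3)‖ ∂(volume.comap Subtype.val) := by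
          conv_lhs => rw [← MeasureTheory.restrict_compl_singleton (μ := (volume : Measure (En 3))) 0]
          exact (lintegral_subtype_comap (measurableSet_singleton _).compl fun y => F ‖y‖).symm
    _ = ∫⁻ y : ({(0:En 3)}ᶜ : Set (En 3)),
          (fun p : sphere (0:En 3) 1 × Ioi (0:ℝ) => F p.2)
            ((homeomorphUnitSphereProd (En 3)) y) ∂(volume.comap Subtype.val) :=
          lintegral_congr fun y => by simp
    _ = ∫⁻ p : sphere (0:En 3) 1 × Ioi (0:ℝ), F p.2
          ∂((volume : Measure (En 3)).toSphere.prod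
            (Measure.volumeIoiPow (Module.finrank ℝ (En 3) - 1))) :=
          (Measure.measurePreserving_homeomorphUnitSphereProd
            (volume : Measure (En 3))).lintegral_comp_emb
            (Homeomorph.measurableEmbedding _) (fun p => F p.2)
    _ = (volume : Measure (En 3)).toSphere Set.univ *
          ∫⁻ r : Ioi (0:ℝ), F r ∂(Measure.volumeIoiPow (Module.finrank ℝ (En 3) - 1)) := by
          rw [lintegral_prod _ (by
            exact ((hF.comp (measurable_subtype_coe.comp measurable_snd)).aemeasurable))]
          simp [lintegral_const]
          ring
    _ = (volume : Measure (En 3)).toSphere Set.univ *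
          ∫⁻ r in Set.Ioi (0:ℝ), ENNReal.ofReal (r ^ 2) * F r := by
          congr 1
          rw [hdim, Measure.volumeIoiPow, lintegral_withDensity_eq_lintegral_mul _
            ((by measurability : Measurable fun r : Ioi (0:ℝ) => ENNReal.ofReal (r.1 ^ 2)))
            (by exact hF.comp measurable_subtype_coe)]
          simp only [Pi.mul_apply]
          exact lintegral_subtype_comap measurableSet_Ioi
            (fun r => ENNReal.ofReal (r ^ 2) * F r)

set_option maxHeartbeats 1000000 in
/-- Estimate (II): the Green-function integral over the ball `{|y| < |x|/2}`
is bounded by `C|x|e^{-√λ|x|}`. -/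
theorem statement7
    (lam gam nu : ℝ) (hlam : 0 < lam) (hgam : 0 < gam) (hnu : 0 < nu) :
    ∃ C > (0:ℝ), ∀ x : En 3, 1 ≤ ‖x‖ →
      (∫ y in {y : En 3 | ‖y‖ < ‖x‖ / 2},
          (Real.exp (-Real.sqrt lam * ‖x - y‖) / ‖x - y‖) *
            (3 * nu * Real.exp (-(2 * Real.sqrt lam + Real.sqrt gam) * ‖y‖) / ‖y‖ ^ 2 +
              Real.exp (-Real.sqrt lam * ‖y‖) / ‖y‖))
        ≤ C * ‖x‖ * Real.exp (-Real.sqrt lam * ‖x‖) := by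
  have ha : 0 < Real.sqrt lam := Real.sqrt_pos.2 hlam
  set a := Real.sqrt lam with ha_def
  set c : ℝ := Real.sqrt lam + Real.sqrt gam with hc_def
  have hc : 0 < c := add_pos (Real.sqrt_pos.2 hlam) (Real.sqrt_pos.2 hgam)
  set K1 := ∫ r in Set.Ioi (0:ℝ), 3 * nu * Real.exp (-c * r) with hK1_def
  have hK1int : IntegrableOn (fun r => 3 * nu * Real.exp (-c * r)) (Set.Ioi (0:ℝ)) :=
    (exp_neg_integrableOn_Ioi 0 hc).const_mul _
  have hK1nonneg : 0 ≤ K1 :=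
    setIntegral_nonneg measurableSet_Ioi fun r _ => by positivity
  have hK1lint : ∫⁻ r in Set.Ioi (0:ℝ), ENNReal.ofReal (3 * nu * Real.exp (-c * r))
      = ENNReal.ofReal K1 :=
    (ofReal_integral_eq_lintegral_ofReal hK1int
      (Filter.Eventually.of_forall fun r => by positivity)).symm
  have hS_ne : ((volume : Measure (En 3)).toSphere Set.univ) ≠ ⊤ := measure_ne_top _ _
  set S := (((volume : Measure (En 3)).toSphere Set.univ)).toReal with hS_def
  have hS0 : 0 ≤ S := ENNReal.toReal_nonneg
  refine ⟨S * (2 * K1 + 1) + 1, by positivity, fun x hx => ?_⟩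
  set X := ‖x‖ with hX_def
  have hX0 : (0:ℝ) < X := lt_of_lt_of_le one_pos hx
  set E := Real.exp (-a * X) with hE_def
  have hE : 0 < E := Real.exp_pos _
  set s : Set (En 3) := {y : En 3 | ‖y‖ < X / 2} with hs_def
  have hs_meas : MeasurableSet s := measurableSet_lt measurable_norm measurable_const
  have m1 : Measurable fun y : En 3 => ‖x - y‖ :=
    (continuous_const.sub continuous_id).norm.measurable
  have mn : Measurable fun y : En 3 => ‖y‖ := continuous_norm.measurable
  set f : En 3 → ℝ := fun y =>
    Real.exp (-a * ‖x - y‖) / ‖x - y‖ *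
      (3 * nu * Real.exp (-(2 * a + Real.sqrt gam) * ‖y‖) / ‖y‖ ^ 2 +
        Real.exp (-a * ‖y‖) / ‖y‖) with hf_def
  have hf_nonneg : ∀ y, 0 ≤ f y := fun y => by
    rw [hf_def]
    positivity
  set KX := 2 / X * E with hKX_def
  have hKX0 : 0 ≤ KX := by positivity
  set h : ℝ → ℝ := fun t => 3 * nu * Real.exp (-c * t) / t ^ 2 + 1 / t with hh_def
  -- pointwise bound
  have hpt : ∀ y ∈ s, f y ≤ KX * h ‖y‖ := by
    intro y hy
    have hy' : ‖y‖ < X / 2 := hy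
    by_cases hy0 : ‖y‖ = 0
    · simp [hf_def, hh_def, hy0]
    have hypos : 0 < ‖y‖ := (norm_nonneg y).lt_of_ne (Ne.symm hy0)
    have h1 : X - ‖y‖ ≤ ‖x - y‖ := norm_sub_norm_le x y
    have hxy2 : X / 2 ≤ ‖x - y‖ := by linarith
    have hxy0 : 0 < ‖x - y‖ := by linarith
    have hnum : Real.exp (-a * ‖x - y‖) ≤ E * Real.exp (a * ‖y‖) := by
      rw [hE_def, ← Real.exp_add]
      apply Real.exp_le_exp.2
      nlinarith [mul_le_mul_of_nonneg_left h1 ha.le]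
    have hA : Real.exp (-a * ‖x - y‖) / ‖x - y‖ ≤ E * Real.exp (a * ‖y‖) / (X / 2) :=
      div_le_div₀ (by positivity) hnum (by positivity) hxy2
    have hB0 : 0 ≤ 3 * nu * Real.exp (-(2 * a + Real.sqrt gam) * ‖y‖) / ‖y‖ ^ 2 +
        Real.exp (-a * ‖y‖) / ‖y‖ := by positivity
    refine le_trans (mul_le_mul_of_nonneg_right hA hB0) (le_of_eq ?_)
    have e1 : Real.exp (a * ‖y‖) * Real.exp (-(2 * a + Real.sqrt gam) * ‖y‖)
        = Real.exp (-c * ‖y‖) := by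
      rw [← Real.exp_add]; congr 1; rw [hc_def, ha_def]; ring
    have e2 : Real.exp (a * ‖y‖) * Real.exp (-a * ‖y‖) = 1 := by
      rw [← Real.exp_add]
      have : a * ‖y‖ + -a * ‖y‖ = 0 := by ring
      rw [this, Real.exp_zero]
    have expand : Real.exp (a * ‖y‖) *
        (3 * nu * Real.exp (-(2 * a + Real.sqrt gam) * ‖y‖) / ‖y‖ ^ 2 +
          Real.exp (-a * ‖y‖) / ‖y‖)
        = 3 * nu * Real.exp (-c * ‖y‖) / ‖y‖ ^ 2 + 1 / ‖y‖ := by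
      rw [← e1, ← e2]; ring
    calc E * Real.exp (a * ‖y‖) / (X / 2) *
          (3 * nu * Real.exp (-(2 * a + Real.sqrt gam) * ‖y‖) / ‖y‖ ^ 2 +
            Real.exp (-a * ‖y‖) / ‖y‖)
        = 2 / X * E * (Real.exp (a * ‖y‖) *
            (3 * nu * Real.exp (-(2 * a + Real.sqrt gam) * ‖y‖) / ‖y‖ ^ 2 +
              Real.exp (-a * ‖y‖) / ‖y‖)) := by
          field_simp
      _ = KX * h ‖y‖ := by rw [expand, hKX_def, hh_def]
  -- measurability
  have hf_meas : AEStronglyMeasurable f (volume.restrict s) := by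
    apply Measurable.aestronglyMeasurable
    rw [hf_def]
    exact ((Real.measurable_exp.comp (m1.const_mul (-a))).div m1).mul
      ((((Real.measurable_exp.comp (mn.const_mul (-(2 * a + Real.sqrt gam)))).const_mul
          (3 * nu)).div (mn.pow_const 2)).add
        ((Real.measurable_exp.comp (mn.const_mul (-a))).div mn))
  rw [integral_eq_lintegral_of_nonneg_ae (Filter.Eventually.of_forall hf_nonneg) hf_meas]
  refine ENNReal.toReal_le_of_le_ofReal (by positivity) ?_
  -- set up the spherical-coordinates function
  set F : ℝ → ℝ≥0∞ := fun t => if t < X / 2 then ENNReal.ofReal (h t) else 0 with hF_def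
  have hh_meas : Measurable fun t : ℝ => ENNReal.ofReal (h t) := by
    rw [hh_def]
    exact ((((Real.measurable_exp.comp (measurable_id.const_mul (-c))).const_mul
        (3 * nu)).div (measurable_id.pow_const 2)).add
      (measurable_const.div measurable_id)).ennreal_ofReal
  have hF_meas : Measurable F := Measurable.ite measurableSet_Iio hh_meas measurable_const
  have hinner : ∫⁻ r in Set.Ioi (0:ℝ), ENNReal.ofReal (r ^ 2) * F r
      ≤ ENNReal.ofReal (K1 + (X / 2) ^ 2) := by
    calc ∫⁻ r in Set.Ioi (0:ℝ), ENNReal.ofReal (r ^ 2) * F r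
        ≤ ∫⁻ r in Set.Ioi (0:ℝ), (ENNReal.ofReal (3 * nu * Real.exp (-c * r)) +
            (Set.Iio (X / 2)).indicator (fun _ => ENNReal.ofReal (X / 2)) r) := by
          refine setLIntegral_mono
            ((((Real.measurable_exp.comp (measurable_id.const_mul (-c))).const_mul
                (3 * nu)).ennreal_ofReal).add
              (measurable_const.indicator measurableSet_Iio)) fun r hr => ?_
          have hr0 : 0 < r := hr
          by_cases hrR : r < X / 2
          · rw [hF_def]
            simp only [if_pos hrR]
            rw [← ENNReal.ofReal_mul (by positivity)]
            have hhr : r ^ 2 * h r = 3 * nu * Real.exp (-c * r) + r := by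
              rw [hh_def]; field_simp
            rw [hhr, ENNReal.ofReal_add (by positivity) hr0.le,
              Set.indicator_of_mem (Set.mem_Iio.2 hrR)]
            exact add_le_add le_rfl (ENNReal.ofReal_le_ofReal (by linarith))
          · rw [hF_def]
            simp only [if_neg hrR, mul_zero]
            exact zero_le
      _ = ENNReal.ofReal K1 +
            ∫⁻ r in Set.Iio (X / 2) ∩ Set.Ioi (0:ℝ), ENNReal.ofReal (X / 2) := by
          rw [lintegral_add_left
            (by exact ((Real.measurable_exp.comp (measurable_id.const_mul (-c))).const_mul
              (3 * nu)).ennreal_ofReal), hK1lint,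
            lintegral_indicator measurableSet_Iio,
            Measure.restrict_restrict measurableSet_Iio]
      _ ≤ ENNReal.ofReal (K1 + (X / 2) ^ 2) := by
          rw [Set.Iio_inter_Ioi, lintegral_const, Measure.restrict_apply MeasurableSet.univ,
            Set.univ_inter, Real.volume_Ioo, ENNReal.ofReal_add hK1nonneg (by positivity),
            ← ENNReal.ofReal_mul (by positivity)]
          refine add_le_add le_rfl (ENNReal.ofReal_le_ofReal ?_)
          nlinarith [hX0]
  calc ∫⁻ y in s, ENNReal.ofReal (f y)
      ≤ ∫⁻ y in s, ENNReal.ofReal KX * ENNReal.ofReal (h ‖y‖) :=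
        setLIntegral_mono (measurable_const.mul (hh_meas.comp mn)) fun y hy => by
          rw [← ENNReal.ofReal_mul hKX0]
          exact ENNReal.ofReal_le_ofReal (hpt y hy)
    _ = ENNReal.ofReal KX * ∫⁻ y in s, ENNReal.ofReal (h ‖y‖) :=
        lintegral_const_mul' _ _ ENNReal.ofReal_ne_top
    _ = ENNReal.ofReal KX * ∫⁻ y : En 3, F ‖y‖ := by
        congr 1
        rw [← lintegral_indicator hs_meas]
        refine lintegral_congr fun y => ?_
        by_cases hy : ‖y‖ < X / 2
        · rw [Set.indicator_of_mem (by exact hy), hF_def]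
          simp [hy]
        · rw [Set.indicator_of_notMem (by exact hy), hF_def]
          simp [hy]
    _ ≤ ENNReal.ofReal KX *
          (((volume : Measure (En 3)).toSphere Set.univ) *
            ENNReal.ofReal (K1 + (X / 2) ^ 2)) := by
        rw [lintegral_fun_norm_En3 F hF_meas]
        exact mul_le_mul_right (mul_le_mul_right hinner _) _
    _ ≤ ENNReal.ofReal ((S * (2 * K1 + 1) + 1) * X * E) := by
        rw [← ENNReal.ofReal_toReal hS_ne, ← hS_def,
          ← ENNReal.ofReal_mul hS0, ← ENNReal.ofReal_mul hKX0]
        refine ENNReal.ofReal_le_ofReal ?_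
        have hX2 : 1 ≤ X ^ 2 := by nlinarith
        have key : KX * (S * (K1 + (X / 2) ^ 2))
            = 2 * E * S * (K1 + (X / 2) ^ 2) / X := by
          rw [hKX_def]; field_simp
        rw [key, div_le_iff₀ hX0]
        nlinarith [mul_nonneg (mul_nonneg hE.le hS0) hK1nonneg,
          mul_nonneg hE.le hS0, hE.le,
          mul_nonneg (mul_nonneg (mul_nonneg hE.le hS0) hK1nonneg) (sub_nonneg.2 hX2)]
end
end
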